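/- The set I = {Γ ∈ A_Φ(G)** : ⟨Γ, λ_Ψ(e)⟩ = 0 and ⟨Γ, u·T⟩ = u(e)⟨Γ, T⟩ for all u ∈ A_Φ(G) and T ∈ PM_Ψ(G)} is a two-sided ideal of the Banach algebra A_Φ(G)** (first Arens product) satisfying I □ I = {0}; consequently I is contained in the Jacobson radical of A_Φ(G)**. -/

import Mathlib

/-!
Write `φ = λ_Ψ(e)`; it is a character of `A_Φ(G)`, and `⟨Γ, u · T⟩ = φ(u) ⟨Γ, T⟩` says exactly
that `Γ ⊙ T = ⟨Γ, T⟩ φ`. Hence `⟨Δ □ Γ, T⟩ = ⟨Γ, T⟩ ⟨Δ, φ⟩`, and since `Γ` kills `φ` and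
`Δ ⊙ φ = ⟨Δ, φ⟩ φ`, both `Δ □ Γ` and `Γ □ Δ` stay in `I`, while `Γ □ Δ = 0` once `Δ ∈ I` too.
An ideal of square zero consists of quasi-regular elements (`-z` is a quasi-inverse of `z`),
so it lies in the Jacobson radical.
-/

open MeasureTheory Filter Topology NormedSpace
open scoped ENNReal ZeroAtInfty

noncomputable section

/-! ### Young functions and the Δ₂ and MA conditions -/

/-- A (real-valued, continuous) Young function. -/
structure IsYoungFunction (Φ : ℝ → ℝ) : Prop where
  even : ∀ x, Φ (-x) = Φ x
  convexOn : ConvexOn ℝ Set.univ Φ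
  nonneg : ∀ x, 0 ≤ Φ x
  map_zero : Φ 0 = 0
  continuous : Continuous Φ
  tendsto_atTop : Tendsto Φ atTop atTop

/-- `(Φ, Ψ)` is a complementary pair of Young functions:
`Ψ y = sup { x * |y| - Φ x : x ≥ 0 }`. -/
def IsComplementaryYoungPair (Φ Ψ : ℝ → ℝ) : Prop :=
  IsYoungFunction Φ ∧ IsYoungFunction Ψ ∧
    ∀ y, Ψ y = sSup {z | ∃ x ≥ (0 : ℝ), z = x * |y| - Φ x}

/-- The Δ₂-condition for a Young function. -/
def HasDeltaTwo (Φ : ℝ → ℝ) : Prop :=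
  ∃ k > (0 : ℝ), ∃ x₀ ≥ (0 : ℝ), ∀ x ≥ x₀, Φ (2 * x) ≤ k * Φ x

/-- The Milnes–Akimonič (MA) condition for a Young function. -/
def HasMACondition (Φ : ℝ → ℝ) : Prop :=
  ∀ ε > (0 : ℝ), ∃ β > (1 : ℝ), ∃ x₀ ≥ (0 : ℝ), ∀ x ≥ x₀,
    β * deriv Φ x ≤ deriv Φ ((1 + ε) * x)

/-! ### Orlicz spaces -/

section Orlicz

variable {G : Type*} [MeasurableSpace G]

/-- Membership in the Orlicz space `L^Φ(G)`. -/
def MemOrlicz (Φ : ℝ → ℝ) (μ : Measure G) (f : G → ℂ) : Prop :=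
  AEStronglyMeasurable f μ ∧ ∃ β > (0 : ℝ), ∫⁻ x, ENNReal.ofReal (Φ (β * ‖f x‖)) ∂μ < ⊤

/-- The Luxemburg (gauge) norm `N_Φ(f)` on `L^Φ(G)`. -/
def luxemburgNorm (Φ : ℝ → ℝ) (μ : Measure G) (f : G → ℂ) : ℝ :=
  sInf {k | 0 < k ∧ ∫⁻ x, ENNReal.ofReal (Φ (‖f x‖ / k)) ∂μ ≤ 1}

/-- The Orlicz norm `‖f‖_Φ`, where `Ψ` is the Young function complementary to `Φ`. -/
def orliczNorm (Φ Ψ : ℝ → ℝ) (μ : Measure G) (f : G → ℂ) : ℝ :=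
  sSup {r | ∃ g : G → ℂ, (∫⁻ x, ENNReal.ofReal (Ψ (‖g x‖)) ∂μ ≤ 1) ∧
    r = ∫ x, ‖f x‖ * ‖g x‖ ∂μ}

end Orlicz

/-! ### The Orlicz Figà-Talamanca Herz algebra `A_Φ(G)` -/

section Aphi

variable {G : Type*} [MeasurableSpace G] [Group G] [TopologicalSpace G]

/-- `f, g` give an admissible representation `u = ∑' n, f n ⋆ (g n)ᵛ` of `u` for `A_Φ(G)`,
where `ǧ x = g x⁻¹`, so that `(f ⋆ ǧ) x = ∫ y, f y * g (x⁻¹ * y)`. -/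
def IsAphiDecomposition (μ : Measure G) (Φ Ψ : ℝ → ℝ) (u : G → ℂ)
    (f g : ℕ → G → ℂ) : Prop :=
  (∀ n, MemOrlicz Φ μ (f n)) ∧ (∀ n, MemOrlicz Ψ μ (g n)) ∧
    Summable (fun n => luxemburgNorm Φ μ (f n) * orliczNorm Ψ Φ μ (g n)) ∧
    ∀ x, u x = ∑' n, ∫ y, f n y * g n (x⁻¹ * y) ∂μ

/-- Membership in `A_Φ(G)` for an element of `C₀(G, ℂ)`. -/
def MemAphi (μ : Measure G) (Φ Ψ : ℝ → ℝ) (u : C₀(G, ℂ)) : Prop :=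
  ∃ f g, IsAphiDecomposition μ Φ Ψ (⇑u) f g

/-- The norm of `A_Φ(G)`. -/
def aphiNorm (μ : Measure G) (Φ Ψ : ℝ → ℝ) (u : C₀(G, ℂ)) : ℝ :=
  sInf {r | ∃ f g, IsAphiDecomposition μ Φ Ψ (⇑u) f g ∧
    r = ∑' n, luxemburgNorm Φ μ (f n) * orliczNorm Ψ Φ μ (g n)}

/-- `A`, together with the embedding `ι : A → C₀(G, ℂ)`, *is* the Orlicz
Figà-Talamanca Herz algebra `A_Φ(G)`: a commutative Banach algebra of
`C₀`-functions (with pointwise operations) whose members are exactly the functions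
admitting an `A_Φ`-decomposition, and carrying the `A_Φ(G)`-norm. -/
structure IsOrliczFigaTalamancaHerzAlgebra (μ : Measure G) (Φ Ψ : ℝ → ℝ)
    (A : Type*) [NonUnitalNormedCommRing A] [NormedSpace ℂ A]
    (ι : A → C₀(G, ℂ)) : Prop where
  injective : Function.Injective ι
  map_add : ∀ a b, ι (a + b) = ι a + ι b
  map_smul : ∀ (c : ℂ) (a), ι (c • a) = c • ι a
  map_mul : ∀ a b, ι (a * b) = ι a * ι b
  mem_range_iff : ∀ u, (∃ a, ι a = u) ↔ MemAphi μ Φ Ψ u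
  norm_eq : ∀ a, ‖a‖ = aphiNorm μ Φ Ψ (ι a)

end Aphi

/-! ### The first Arens product on the double dual of a Banach algebra -/

section Arens

variable (A : Type*) [NonUnitalNormedRing A] [NormedSpace ℂ A]
  [SMulCommClass ℂ A A] [IsScalarTower ℂ A A]

open ContinuousLinearMap in
/-- The module action `u • T` of `A` on its dual: `⟨u • T, v⟩ = ⟨T, u * v⟩`. -/
def dotAct (u : A) (T : StrongDual ℂ A) : StrongDual ℂ A :=
  T.comp (ContinuousLinearMap.mul ℂ A u)

open ContinuousLinearMap in
/-- The action `dotAct` as a continuous bilinear map, `(T, u) ↦ u • T`. -/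
def dotActR : StrongDual ℂ A →L[ℂ] A →L[ℂ] StrongDual ℂ A :=
  ((compL ℂ A (A →L[ℂ] A) (StrongDual ℂ A)).flip (ContinuousLinearMap.mul ℂ A)).comp
    (compL ℂ A A ℂ)

open ContinuousLinearMap in
/-- The operation `Γ ⊙ T` on `A** × A*`: `⟨Γ ⊙ T, u⟩ = ⟨Γ, u • T⟩`. -/
def arensOdot : StrongDual ℂ (StrongDual ℂ A) →L[ℂ] StrongDual ℂ A →L[ℂ] StrongDual ℂ A :=
  letI : SeminormedAddCommGroup (A →L[ℂ] StrongDual ℂ A) := inferInstance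
  letI : NormedSpace ℂ (A →L[ℂ] StrongDual ℂ A) := inferInstance
  ((compL ℂ (StrongDual ℂ A) (A →L[ℂ] StrongDual ℂ A) (StrongDual ℂ A)).flip (dotActR A)).comp
    (compL ℂ A (StrongDual ℂ A) ℂ)

/-- The first Arens product `Γ' □ Γ` on the double dual `A**`:
`⟨Γ' □ Γ, T⟩ = ⟨Γ', Γ ⊙ T⟩`. -/
def arens (Γ' Γ : StrongDual ℂ (StrongDual ℂ A)) : StrongDual ℂ (StrongDual ℂ A) :=
  Γ'.comp (arensOdot A Γ)

/-- The space `UCB_Ψ(Ĝ) = A* ⬝ A`: the norm closure in `A*` of the linear span of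
`{u • T : u ∈ A, T ∈ A*}`. -/
def UCBSubmodule : Submodule ℂ (StrongDual ℂ A) :=
  (Submodule.span ℂ {T | ∃ (u : A) (S : StrongDual ℂ A), T = dotAct A u S}).topologicalClosure

variable {A} in
theorem dotAct_mem_UCBSubmodule (u : A) (S : StrongDual ℂ A) :
    dotAct A u S ∈ UCBSubmodule A :=
  Submodule.le_topologicalClosure _ (Submodule.subset_span ⟨u, S, rfl⟩)

variable {A} in
/-- The restriction of `Γ ∈ A**` to the subspace `UCB_Ψ(Ĝ) ⊆ A*`. -/
def restrictToUCB (Γ : StrongDual ℂ (StrongDual ℂ A)) : StrongDual ℂ ↥(UCBSubmodule A) :=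
  Γ.comp (UCBSubmodule A).subtypeL

end Arens

/-! ### Dual maps, supports, radicals, topological centres, amenability -/

/-- The adjoint (dual map) of a continuous linear map. -/
def dualMapL {E F : Type*} [NormedAddCommGroup E] [NormedSpace ℂ E]
    [NormedAddCommGroup F] [NormedSpace ℂ F] (m : E →L[ℂ] F) :
    StrongDual ℂ F →L[ℂ] StrongDual ℂ E :=
  (ContinuousLinearMap.compL ℂ E F ℂ).flip m

section Support

variable {G : Type*} [TopologicalSpace G] {A : Type*} [NonUnitalNormedCommRing A]
  [NormedSpace ℂ A]

/-- The support of a functional `T ∈ A* = PM_Ψ(G)`: `x ∉ supp T` iff there is a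
neighbourhood `V` of `x` such that `⟨T, v⟩ = 0` for all `v ∈ A` supported in `V`. -/
def pmSupport (ι : A → C₀(G, ℂ)) (T : StrongDual ℂ A) : Set G :=
  {x | ∀ V ∈ nhds x, ∃ a : A, tsupport ⇑(ι a) ⊆ V ∧ T a ≠ 0}

end Support

/-- `z` is left quasi-regular with respect to the multiplication `mul`:
there is `b` with `b + z + b * z = 0` (i.e. `1 + z` has a left inverse `1 + b`
in the unitization). -/
def IsLeftQuasiRegularWith {R : Type*} [AddCommGroup R] (mul : R → R → R) (z : R) : Prop :=
  ∃ b, b + z + mul b z = 0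

/-- Membership in the Jacobson radical of the (possibly non-unital) ring `(R, +, mul)`:
every element of the right ideal generated by `a` is left quasi-regular. -/
def MemJacobsonRadicalWith {R : Type*} [AddCommGroup R] (mul : R → R → R) (a : R) : Prop :=
  ∀ (x : R) (n : ℤ), IsLeftQuasiRegularWith mul (mul a x + n • a)

/-- The (possibly non-unital) ring `(R, +, mul)` is semi-simple: its Jacobson radical
is `{0}`. -/
def IsSemisimpleWith {R : Type*} [AddCommGroup R] (mul : R → R → R) : Prop :=
  ∀ a, MemJacobsonRadicalWith mul a → a = 0

/-- The topological centre of the dual of `E` with respect to a product `mul` on the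
dual: the set of all `m` such that `m' ↦ mul m m'` is `w*`-`w*`-continuous. -/
def topCenterWith {E : Type*} [NormedAddCommGroup E] [NormedSpace ℂ E]
    (mul : StrongDual ℂ E → StrongDual ℂ E → StrongDual ℂ E) : Set (StrongDual ℂ E) :=
  {m | Continuous fun m' : WeakDual ℂ E =>
    StrongDual.toWeakDual (mul m (WeakDual.toStrongDual m'))}

section Amenable

variable {G : Type*} [MeasurableSpace G] [Group G]

/-- Amenability of `G`: there is a positive, norm-one, left translation invariant
linear functional on `L^∞(G)`. -/
def HasLeftInvariantMean (μ : Measure G) : Prop :=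
  ∃ Λ : Lp ℝ ⊤ μ →L[ℝ] ℝ, ‖Λ‖ = 1 ∧
    (∀ f : Lp ℝ ⊤ μ, (∀ᵐ y ∂μ, 0 ≤ f y) → 0 ≤ Λ f) ∧
    ∀ (x : G) (f g : Lp ℝ ⊤ μ), (∀ᵐ y ∂μ, g y = f (x⁻¹ * y)) → Λ g = Λ f

end Amenable

/-- A normed space is weakly sequentially complete if every weakly Cauchy sequence
converges weakly. -/
def WeaklySequentiallyComplete (E : Type*) [NormedAddCommGroup E] [NormedSpace ℂ E] : Prop :=
  ∀ u : ℕ → E, (∀ T : StrongDual ℂ E, CauchySeq fun n => T (u n)) →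
    ∃ x : E, ∀ T : StrongDual ℂ E, Tendsto (fun n => T (u n)) atTop (nhds (T x))

section PF

variable {G : Type*} [MeasurableSpace G] [Group G] [TopologicalSpace G]

/-- The algebra of `Ψ`-pseudofunctions `PF_Ψ(G)`, realised inside `A_Φ(G)* = PM_Ψ(G)`:
the norm closure of the span of the functionals induced by `L¹(G)`-functions. -/
def PFSubmodule (μ : Measure G) {A : Type*} [NonUnitalNormedCommRing A]
    [NormedSpace ℂ A] (ι : A → C₀(G, ℂ)) : Submodule ℂ (StrongDual ℂ A) :=
  (Submodule.span ℂ {T | ∃ f : G → ℂ, Integrable f μ ∧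
    ∀ a, T a = ∫ x, f x * ι a x ∂μ}).topologicalClosure

end PF


/-! ### Standing hypotheses -/

variable {G : Type*} [Group G] [TopologicalSpace G] [IsTopologicalGroup G]
  [LocallyCompactSpace G] [MeasurableSpace G] [BorelSpace G]

/-- The set `I = {Γ ∈ A_Φ(G)** : ⟨Γ, λ_Ψ(e)⟩ = 0, ⟨Γ, u ⬝ T⟩ = u(e) ⟨Γ, T⟩}`, where
`lamE = λ_Ψ(e)` is evaluation at the identity. -/
def timIdealSet {G : Type*} [Group G] [TopologicalSpace G]
    {A : Type*} [NonUnitalNormedCommRing A] [NormedSpace ℂ A] [SMulCommClass ℂ A A]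
    [IsScalarTower ℂ A A] (ι : A → C₀(G, ℂ)) (lamE : StrongDual ℂ A) :
    Set (StrongDual ℂ (StrongDual ℂ A)) :=
  {Γ | Γ lamE = 0 ∧ ∀ (u : A) (T : StrongDual ℂ A), Γ (dotAct A u T) = ι u 1 * Γ T}

open ContinuousLinearMap

section QuasiRegular

variable {R : Type*} [AddCommGroup R] {mul : R → R → R}

theorem isLeftQuasiRegularWith_of_mul_neg_self_eq_zero {z : R} (hz : mul (-z) z = 0) :
    IsLeftQuasiRegularWith mul z :=
  ⟨-z, by rw [hz, neg_add_cancel, add_zero]⟩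

theorem memJacobsonRadicalWith_of_mem_of_mul_eq_zero (hneg : ∀ a b, mul (-a) b = -mul a b)
    {S : AddSubgroup R} (hS : ∀ a ∈ S, ∀ x, mul a x ∈ S)
    (hsq : ∀ a ∈ S, ∀ b ∈ S, mul a b = 0) {a : R} (ha : a ∈ S) :
    MemJacobsonRadicalWith mul a := fun x n =>
  have hz := S.add_mem (hS a ha x) (S.zsmul_mem ha n)
  isLeftQuasiRegularWith_of_mul_neg_self_eq_zero (by rw [hneg, hsq _ hz _ hz, neg_zero])

end QuasiRegular

section ArensProduct

variable {A : Type*} [NonUnitalNormedRing A] [NormedSpace ℂ A]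
  [SMulCommClass ℂ A A] [IsScalarTower ℂ A A]

@[simp]
theorem dotAct_apply (u : A) (T : StrongDual ℂ A) (v : A) : dotAct A u T v = T (u * v) := rfl

@[simp]
theorem arensOdot_apply (Γ : StrongDual ℂ (StrongDual ℂ A)) (T : StrongDual ℂ A) (u : A) :
    arensOdot A Γ T u = Γ (dotAct A u T) := rfl

theorem arens_apply (Γ' Γ : StrongDual ℂ (StrongDual ℂ A)) (T : StrongDual ℂ A) :
    arens A Γ' Γ T = Γ' (arensOdot A Γ T) := rfl

theorem neg_arens (Γ' Γ : StrongDual ℂ (StrongDual ℂ A)) :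
    arens A (-Γ') Γ = -arens A Γ' Γ :=
  neg_comp Γ' (arensOdot A Γ)

theorem dotAct_dotAct (u v : A) (T : StrongDual ℂ A) :
    dotAct A v (dotAct A u T) = dotAct A (u * v) T := by
  ext w
  simp only [dotAct_apply, mul_assoc]

theorem arensOdot_dotAct (Δ : StrongDual ℂ (StrongDual ℂ A)) (u : A) (T : StrongDual ℂ A) :
    arensOdot A Δ (dotAct A u T) = dotAct A u (arensOdot A Δ T) := by
  ext v
  simp only [arensOdot_apply, dotAct_apply, dotAct_dotAct]

theorem dotAct_of_map_mul {φ : StrongDual ℂ A} (hφ : ∀ u v, φ (u * v) = φ u * φ v) (u : A) :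
    dotAct A u φ = φ u • φ := by
  ext v
  simp only [dotAct_apply, hφ, smul_apply, smul_eq_mul]

theorem arensOdot_of_map_mul {φ : StrongDual ℂ A} (hφ : ∀ u v, φ (u * v) = φ u * φ v)
    (Δ : StrongDual ℂ (StrongDual ℂ A)) : arensOdot A Δ φ = Δ φ • φ := by
  ext u
  simp only [arensOdot_apply, dotAct_of_map_mul hφ, map_smul, smul_apply, smul_eq_mul, mul_comm]

variable (A) in
/-- For `φ = λ_Ψ(e)` this is the set `I` of the theorem. -/
def charIdeal (φ : StrongDual ℂ A) : Submodule ℂ (StrongDual ℂ (StrongDual ℂ A)) where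
  carrier := {Γ | Γ φ = 0 ∧ ∀ (u : A) (T : StrongDual ℂ A), Γ (dotAct A u T) = φ u * Γ T}
  add_mem' {Γ Δ} hΓ hΔ :=
    ⟨by simp [hΓ.1, hΔ.1], fun u T => by simp [hΓ.2 u T, hΔ.2 u T, mul_add]⟩
  zero_mem' := ⟨rfl, fun _ _ => by simp⟩
  smul_mem' c Γ hΓ := ⟨by simp [hΓ.1], fun u T => by simp [hΓ.2 u T, mul_left_comm]⟩

variable {φ : StrongDual ℂ A}

theorem mem_charIdeal {Γ : StrongDual ℂ (StrongDual ℂ A)} :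
    Γ ∈ charIdeal A φ ↔ Γ φ = 0 ∧ ∀ u T, Γ (dotAct A u T) = φ u * Γ T :=
  Iff.rfl

theorem arensOdot_eq_smul_of_mem_charIdeal {Γ : StrongDual ℂ (StrongDual ℂ A)}
    (hΓ : Γ ∈ charIdeal A φ) (T : StrongDual ℂ A) : arensOdot A Γ T = Γ T • φ := by
  ext u
  rw [arensOdot_apply, hΓ.2 u T, smul_apply, smul_eq_mul, mul_comm]

theorem arens_mem_charIdeal_of_right_mem {Γ : StrongDual ℂ (StrongDual ℂ A)}
    (hΓ : Γ ∈ charIdeal A φ) (Δ : StrongDual ℂ (StrongDual ℂ A)) :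
    arens A Δ Γ ∈ charIdeal A φ := by
  have hΓ' := arensOdot_eq_smul_of_mem_charIdeal hΓ
  refine ⟨?_, fun u T => ?_⟩
  · rw [arens_apply, hΓ', hΓ.1, zero_smul ℂ φ, map_zero]
  · rw [arens_apply, arens_apply, hΓ', hΓ', hΓ.2 u T, map_smul, map_smul, smul_eq_mul,
      smul_eq_mul, mul_assoc]

theorem arens_mem_charIdeal_of_left_mem (hφ : ∀ u v, φ (u * v) = φ u * φ v)
    {Γ : StrongDual ℂ (StrongDual ℂ A)} (hΓ : Γ ∈ charIdeal A φ)
    (Δ : StrongDual ℂ (StrongDual ℂ A)) : arens A Γ Δ ∈ charIdeal A φ := by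
  refine ⟨?_, fun u T => ?_⟩
  · rw [arens_apply, arensOdot_of_map_mul hφ, map_smul, hΓ.1, smul_zero]
  · rw [arens_apply, arensOdot_dotAct, hΓ.2, arens_apply]

theorem arens_eq_zero_of_mem_charIdeal {Γ Δ : StrongDual ℂ (StrongDual ℂ A)}
    (hΓ : Γ ∈ charIdeal A φ) (hΔ : Δ ∈ charIdeal A φ) : arens A Γ Δ = 0 := by
  ext T
  rw [arens_apply, arensOdot_eq_smul_of_mem_charIdeal hΔ, map_smul, hΓ.1, smul_zero, zero_apply]

theorem memJacobsonRadicalWith_arens_of_mem_charIdeal (hφ : ∀ u v, φ (u * v) = φ u * φ v)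
    {Γ : StrongDual ℂ (StrongDual ℂ A)} (hΓ : Γ ∈ charIdeal A φ) :
    MemJacobsonRadicalWith (arens A) Γ := by
  refine memJacobsonRadicalWith_of_mem_of_mul_eq_zero (S := (charIdeal A φ).toAddSubgroup)
    neg_arens (fun _ ha => ?_) (fun _ ha _ hb => ?_) hΓ
  · exact arens_mem_charIdeal_of_left_mem hφ ha
  · exact arens_eq_zero_of_mem_charIdeal ha hb

end ArensProduct

theorem timIdealSet_isIdeal_sq_zero_subset_radical_general
    (μ : Measure G) (Φ Ψ : ℝ → ℝ)
    (A : Type*) [NonUnitalNormedCommRing A] [NormedSpace ℂ A] [SMulCommClass ℂ A A]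
    [IsScalarTower ℂ A A] (ι : A → C₀(G, ℂ))
    (hA : IsOrliczFigaTalamancaHerzAlgebra μ Φ Ψ A ι)
    (lamE : StrongDual ℂ A) (hlamE : ∀ a : A, lamE a = ι a 1) :
    (∀ Γ ∈ timIdealSet ι lamE, ∀ Δ : StrongDual ℂ (StrongDual ℂ A),
        arens A Δ Γ ∈ timIdealSet ι lamE ∧ arens A Γ Δ ∈ timIdealSet ι lamE) ∧
    (∀ Γ ∈ timIdealSet ι lamE, ∀ Δ ∈ timIdealSet ι lamE, arens A Γ Δ = 0) ∧
    (∀ Γ ∈ timIdealSet ι lamE, MemJacobsonRadicalWith (arens A) Γ) := by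
  have hmul : ∀ u v, lamE (u * v) = lamE u * lamE v := fun u v => by
    simp only [hlamE, hA.map_mul, ZeroAtInftyContinuousMap.mul_apply]
  have hI : timIdealSet ι lamE = charIdeal A lamE := by
    ext Γ
    simp only [timIdealSet, Set.mem_ofPred_eq, SetLike.mem_coe, mem_charIdeal, hlamE]
  rw [hI]
  exact ⟨fun Γ hΓ Δ => ⟨arens_mem_charIdeal_of_right_mem hΓ Δ,
      arens_mem_charIdeal_of_left_mem hmul hΓ Δ⟩,
    fun Γ hΓ Δ hΔ => arens_eq_zero_of_mem_charIdeal hΓ hΔ,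
    fun Γ hΓ => memJacobsonRadicalWith_arens_of_mem_charIdeal hmul hΓ⟩

/-- The set `I` above is a two-sided ideal of `A_Φ(G)**` (first Arens
product) with `I □ I = {0}`; consequently `I` is contained in the Jacobson radical of
`A_Φ(G)**`.  Here `lamE` is `λ_Ψ(e)`, i.e. evaluation at the identity of `G`. -/
theorem timIdealSet_isIdeal_sq_zero_subset_radical
    (μ : Measure G) [μ.IsHaarMeasure] (Φ Ψ : ℝ → ℝ)
    (hpair : IsComplementaryYoungPair Φ Ψ) (hΦΔ : HasDeltaTwo Φ) (hΨΔ : HasDeltaTwo Ψ)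
    (A : Type*) [NonUnitalNormedCommRing A] [NormedSpace ℂ A] [SMulCommClass ℂ A A]
    [IsScalarTower ℂ A A] [CompleteSpace A] (ι : A → C₀(G, ℂ))
    (hA : IsOrliczFigaTalamancaHerzAlgebra μ Φ Ψ A ι)
    (lamE : StrongDual ℂ A) (hlamE : ∀ a : A, lamE a = ι a 1) :
    (∀ Γ ∈ timIdealSet ι lamE, ∀ Δ : StrongDual ℂ (StrongDual ℂ A),
        arens A Δ Γ ∈ timIdealSet ι lamE ∧ arens A Γ Δ ∈ timIdealSet ι lamE) ∧
    (∀ Γ ∈ timIdealSet ι lamE, ∀ Δ ∈ timIdealSet ι lamE, arens A Γ Δ = 0) ∧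
    (∀ Γ ∈ timIdealSet ι lamE, MemJacobsonRadicalWith (arens A) Γ) :=
  timIdealSet_isIdeal_sq_zero_subset_radical_general μ Φ Ψ A ι hA lamE hlamE

end
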